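/- (Anyon–Bose expansion of the reduced density matrix, ordering $O_-$.) Let $\kappa \in \mathbb{R}$, $L>0$, $V = [-L/2, L/2]$, $N \ge n \ge 1$, and let $\chi: \mathbb{R}^N \to \mathbb{C}$ be continuous and totally symmetric. Let $x_1' < x_1 < \cdots < x_n' < x_n$ be points of $V$ and set $I_- = [x_1',x_1] \cup \cdots \cup [x_n',x_n]$. Define $\chi^a = A_\kappa\, \chi$ and the statistics constant $C_- = A_{-\kappa}(x_1',\dots,x_n')\, A_\kappa(x_1,\dots,x_n)$. Then $\int_{V^{N-n}} \overline{\chi^a(z_1,\dots,z_{N-n}, x_1',\dots,x_n')}\, \chi^a(z_1,\dots,z_{N-n}, x_1,\dots,x_n)\, dz = C_- \sum_{j=0}^{N-n} (-1)^j (1 - e^{-i\pi\kappa})^j \binom{N-n}{j} \int_{I_-^{\,j}} dw \int_{V^{N-n-j}} dz\, \overline{\chi(w_1,\dots,w_j, z_1,\dots,z_{N-n-j}, x_1',\dots,x_n')}\, \chi(w_1,\dots,w_j, z_1,\dots,z_{N-n-j}, x_1,\dots,x_n)$. -/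

import Mathlib

open MeasureTheory

/-- The statistics factor `A_κ(z₁,…,z_N) = exp(iπκ ∑_{j<k} ε(z_j - z_k)/2)`. -/
noncomputable def Afac (κ : ℝ) {N : ℕ} (z : Fin N → ℝ) : ℂ :=
  Complex.exp (Complex.I * Real.pi * κ *
    (∑ j : Fin N, ∑ k ∈ Finset.univ.filter (fun k => j < k), Real.sign (z j - z k)) / 2)

/-!
Conjugating `A_κ` flips the sign of `κ`, so `conj (A_κ(z, x')) A_κ(z, x)` is
`A_{-κ}(x') A_κ(x)` times the phase `exp (iπκ/2 ∑ᵢ ∑ₗ (ε(zᵢ - xₗ) - ε(zᵢ - x'ₗ)))`: the pairs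
inside `z` and inside `x`, `x'` cancel. Off the null set where some `zᵢ` hits an endpoint, the sum
over `l` is `-2` if `zᵢ ∈ I₋` and `0` otherwise, because the intervals `[x'ₗ, xₗ]` are disjoint.
So the phase is `∏ᵢ (1 + (e^{-iπκ} - 1) 1_{I₋}(zᵢ))`; expanding the product over subsets `S` of
the coordinates turns the integral into a sum of integrals over boxes with `I₋` in the slots of
`S`, and the symmetry of `χ` moves `S` to the first `|S|` slots, which produces the binomial
coefficients.
-/

open Function

noncomputable def pairSignSum {N : ℕ} (z : Fin N → ℝ) : ℝ :=
  ∑ j : Fin N, ∑ k ∈ Finset.univ.filter (fun k => j < k), Real.sign (z j - z k)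

theorem Afac_eq_exp (κ : ℝ) {N : ℕ} (z : Fin N → ℝ) :
    Afac κ z = Complex.exp (Complex.I * Real.pi * κ * pairSignSum z / 2) := by
  simp [Afac, pairSignSum]

theorem conj_Afac (κ : ℝ) {N : ℕ} (z : Fin N → ℝ) : starRingEnd ℂ (Afac κ z) = Afac (-κ) z := by
  rw [Afac, ← Complex.exp_conj, Afac]
  congr 1
  simp only [map_div₀, map_mul, Complex.conj_I, Complex.conj_ofReal, map_ofNat]
  push_cast
  ring

theorem conj_Afac_mul_Afac (κ : ℝ) {N : ℕ} (w w' : Fin N → ℝ) :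
    starRingEnd ℂ (Afac κ w') * Afac κ w
      = Complex.exp (Complex.I * Real.pi * κ * (pairSignSum w - pairSignSum w') / 2) := by
  rw [conj_Afac, Afac_eq_exp, Afac_eq_exp, ← Complex.exp_add]
  push_cast
  ring_nf

theorem pairSignSum_append {m n : ℕ} (z : Fin m → ℝ) (x : Fin n → ℝ) :
    pairSignSum (Fin.append z x)
      = pairSignSum z + ∑ i, ∑ l, Real.sign (z i - x l) + pairSignSum x := by
  have hmm (i k : Fin m) : Fin.castAdd n i < Fin.castAdd n k ↔ i < k := by
    simp only [Fin.lt_def, Fin.val_castAdd]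
  have hmn (i : Fin m) (l : Fin n) : Fin.castAdd n i < Fin.natAdd m l := by
    simp only [Fin.lt_def, Fin.val_castAdd, Fin.val_natAdd]; omega
  have hnm (i : Fin m) (l : Fin n) : ¬ Fin.natAdd m l < Fin.castAdd n i := by
    simp only [Fin.lt_def, Fin.val_castAdd, Fin.val_natAdd]; omega
  simp only [pairSignSum, Finset.sum_filter, Fin.sum_univ_add, Fin.append_left, Fin.append_right,
    Fin.natAdd_lt_natAdd_iff, hmm, hmn, hnm, if_true, if_false, Finset.sum_const_zero,
    Finset.sum_add_distrib, add_zero, add_assoc]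

theorem Real.sign_sub_sub_sign_sub {a b t : ℝ} (hab : a < b) (ha : t ≠ a) (hb : t ≠ b) :
    Real.sign (t - b) - Real.sign (t - a) = (Set.Icc a b).indicator (fun _ => -2) t := by
  rcases hb.lt_or_gt with htb | htb
  · rcases ha.lt_or_gt with hta | hta
    · rw [Real.sign_of_neg (by linarith), Real.sign_of_neg (by linarith),
        Set.indicator_of_notMem (fun h => by linarith [h.1])]
      ring
    · rw [Real.sign_of_neg (by linarith), Real.sign_of_pos (by linarith),
        Set.indicator_of_mem (Set.mem_Icc.2 ⟨hta.le, htb.le⟩)]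
      norm_num
  · rw [Real.sign_of_pos (by linarith), Real.sign_of_pos (by linarith),
      Set.indicator_of_notMem (fun h => by linarith [h.2])]
    ring

theorem pairwise_disjoint_Icc_of_right_lt_left {ι : Type*} [LinearOrder ι] {a b : ι → ℝ}
    (h : ∀ j k, j < k → b j < a k) : Pairwise (Disjoint on fun l => Set.Icc (a l) (b l)) := by
  intro j k hjk
  rcases hjk.lt_or_gt with hlt | hlt
  · exact Set.disjoint_left.2 fun t hj hk => by linarith [h j k hlt, hj.2, hk.1]
  · exact Set.disjoint_left.2 fun t hj hk => by linarith [h k j hlt, hj.1, hk.2]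

theorem sum_sign_sub_sub_sign_sub {ι : Type*} [Fintype ι] {a b : ι → ℝ} {t : ℝ}
    (hab : ∀ l, a l < b l) (hdisj : Pairwise (Disjoint on fun l => Set.Icc (a l) (b l)))
    (ht : ∀ l, t ≠ a l ∧ t ≠ b l) :
    ∑ l, (Real.sign (t - b l) - Real.sign (t - a l))
      = (⋃ l, Set.Icc (a l) (b l)).indicator (fun _ => -2) t := by
  classical
  have h := Finset.indicator_biUnion_apply Finset.univ (fun l => Set.Icc (a l) (b l))
    (f := fun _ : ℝ => (-2 : ℝ)) (fun i _ j _ hij => hdisj hij) t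
  simp only [Finset.mem_univ, Set.iUnion_true] at h
  rw [h]
  exact Finset.sum_congr rfl fun l _ => Real.sign_sub_sub_sign_sub (hab l) (ht l).1 (ht l).2

theorem Complex.exp_mul_indicator_neg_two (θ : ℂ) (s : Set ℝ) (t : ℝ) :
    Complex.exp (θ * ((s.indicator (fun _ => (-2 : ℝ)) t : ℝ) : ℂ) / 2)
      = 1 + (Complex.exp (-θ) - 1) * s.indicator 1 t := by
  by_cases h : t ∈ s
  · simp only [Set.indicator_of_mem h, Pi.one_apply]; push_cast; ring_nf
  · simp [Set.indicator_of_notMem h]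

theorem conj_Afac_append_mul_Afac_append (κ : ℝ) {m n : ℕ} {x x' : Fin n → ℝ}
    (hx'x : ∀ l, x' l < x l) (hdisj : Pairwise (Disjoint on fun l => Set.Icc (x' l) (x l)))
    (z : Fin m → ℝ) (hz : ∀ i l, z i ≠ x' l ∧ z i ≠ x l) :
    starRingEnd ℂ (Afac κ (Fin.append z x')) * Afac κ (Fin.append z x)
      = Afac (-κ) x' * Afac κ x * ∏ i, (1 + (Complex.exp (-(Complex.I * Real.pi * κ)) - 1) *
          (⋃ l, Set.Icc (x' l) (x l)).indicator 1 (z i)) := by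
  have hsign (i : Fin m) :
      (((⋃ l, Set.Icc (x' l) (x l)).indicator (fun _ => (-2 : ℝ)) (z i) : ℝ) : ℂ)
      = ∑ l, ((Real.sign (z i - x l) : ℂ) - Real.sign (z i - x' l)) := by
    rw [← sum_sign_sub_sub_sign_sub hx'x hdisj (hz i)]
    push_cast
    rfl
  simp only [← Complex.exp_mul_indicator_neg_two, hsign, ← conj_Afac, conj_Afac_mul_Afac,
    ← Complex.exp_sum, ← Complex.exp_add, pairSignSum_append]
  congr 1
  push_cast
  simp only [Finset.sum_sub_distrib, ← Finset.sum_div, ← Finset.mul_sum]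
  ring

theorem Fin.append_comp_perm {α : Type*} {m n : ℕ} (z : Fin m → α) (y : Fin n → α)
    (σ : Equiv.Perm (Fin m)) :
    Fin.append (z ∘ σ) y
      = Fin.append z y ∘ Equiv.permCongr finSumFinEquiv (σ.sumCongr (Equiv.refl _)) := by
  funext i
  refine Fin.addCases (fun i => ?_) (fun i => ?_) i <;> simp

section
variable {ι α : Type*} [Fintype ι]

theorem prod_one_add_mul_indicator {R : Type*} [CommSemiring R] (c : R) (s : Set α) (z : ι → α) :
    ∏ i, (1 + c * s.indicator 1 (z i)) = ∑ S ∈ (Finset.univ : Finset ι).powerset,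
      c ^ S.card * ((S : Set ι).pi fun _ => s).indicator 1 z := by
  rw [Finset.prod_one_add]
  refine Finset.sum_congr rfl fun S _ => ?_
  rw [Finset.prod_mul_distrib, Finset.prod_const, Set.indicator_pi_one_apply]

theorem setIntegral_univ_pi_indicator [MeasurableSpace α] {E : Type*} [NormedAddCommGroup E]
    [NormedSpace ℝ E] (μ : Measure (ι → α)) (G : (ι → α) → E) {s t : Set α}
    (hs : MeasurableSet s) (hst : s ⊆ t) (S : Finset ι) [DecidablePred (· ∈ S)] :
    ∫ z in Set.univ.pi (fun _ => t), ((S : Set ι).pi fun _ => s).indicator G z ∂μ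
      = ∫ z in Set.univ.pi (fun i => if i ∈ S then s else t), G z ∂μ := by
  have hSs : MeasurableSet ((S : Set ι).pi fun _ => s) :=
    MeasurableSet.pi (Set.to_countable _) fun _ _ => hs
  rw [integral_indicator hSs, Measure.restrict_restrict hSs]
  congr 2
  ext z
  simp only [Set.mem_inter_iff, Set.mem_pi, Set.mem_univ, Finset.mem_coe, true_implies]
  refine ⟨fun ⟨hS, ht⟩ i => ?_, fun h => ⟨fun i hi => ?_, fun i => ?_⟩⟩
  · split_ifs with hi
    exacts [hS i hi, ht i]
  · simpa [hi] using h i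
  · by_cases hi : i ∈ S
    · exact hst (by simpa [hi] using h i)
    · simpa [hi] using h i

theorem setIntegral_univ_pi_ite_eq_of_card_eq [MeasureSpace α] [SigmaFinite (volume : Measure α)]
    {E : Type*} [NormedAddCommGroup E] [NormedSpace ℝ E] [DecidableEq ι]
    (G : (ι → α) → E) (hG : ∀ (σ : Equiv.Perm ι) z, G (z ∘ σ) = G z) (A B : Set α)
    {S T : Finset ι} (hST : S.card = T.card) :
    ∫ z in Set.univ.pi (fun i => if i ∈ S then A else B), G z
      = ∫ z in Set.univ.pi (fun i => if i ∈ T then A else B), G z := by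
  obtain ⟨σ, hσ⟩ := Equiv.Perm.exists_map_finset_eq S T hST
  have hmem (i : ι) : σ i ∈ T ↔ i ∈ S := by simp [← hσ]
  let e := MeasurableEquiv.piCongrLeft (fun _ : ι => α) σ
  have he (z : ι → α) : e z = z ∘ σ.symm := by
    funext i; simp [e, MeasurableEquiv.coe_piCongrLeft, Equiv.piCongrLeft_apply]
  symm
  rw [← (volume_measurePreserving_piCongrLeft (fun _ : ι => α) σ).setIntegral_preimage_emb
    e.measurableEmbedding, MeasurableEquiv.coe_piCongrLeft, Equiv.piCongrLeft_preimage_univ_pi]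
  have hGe : (fun z => G (e z)) = G := funext fun z => by rw [he, hG]
  simp only [hmem]
  rw [← MeasurableEquiv.coe_piCongrLeft, hGe]

theorem ae_apply_ne {κ : Type*} [Finite κ] [MeasureSpace α]
    [SigmaFinite (volume : Measure α)] [NullSingletonClass (volume : Measure α)] (p : κ → α) :
    ∀ᵐ z : ι → α, ∀ i l, z i ≠ p l := by
  simp only [ae_all_iff]
  intro i l
  exact Measure.ae_eval_ne (fun _ : ι => (volume : Measure α)) i (p l)

end

theorem setIntegral_prod_one_add_mul_indicator {α 𝕜 : Type*} [MeasureSpace α]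
    [SigmaFinite (volume : Measure α)] [RCLike 𝕜] {m : ℕ} (G : (Fin m → α) → 𝕜)
    (hG : ∀ (σ : Equiv.Perm (Fin m)) z, G (z ∘ σ) = G z) {s t : Set α} (hs : MeasurableSet s)
    (hst : s ⊆ t) (hGint : IntegrableOn G (Set.univ.pi fun _ => t)) (c : 𝕜) :
    ∫ z in Set.univ.pi (fun _ => t), (∏ i, (1 + c * s.indicator 1 (z i))) * G z
      = ∑ j ∈ Finset.range (m + 1), c ^ j * m.choose j *
          ∫ z in Set.univ.pi (fun i : Fin m => if (i : ℕ) < j then s else t), G z := by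
  have hSs (S : Finset (Fin m)) : MeasurableSet ((S : Set (Fin m)).pi fun _ => s) :=
    MeasurableSet.pi (Set.to_countable _) fun _ _ => hs
  have hexpand (z : Fin m → α) : (∏ i, (1 + c * s.indicator 1 (z i))) * G z
      = ∑ S ∈ (Finset.univ : Finset (Fin m)).powerset,
          c ^ S.card * ((S : Set (Fin m)).pi fun _ => s).indicator G z := by
    rw [prod_one_add_mul_indicator, Finset.sum_mul]
    refine Finset.sum_congr rfl fun S _ => ?_
    rw [mul_assoc, ← Set.indicator_mul_left]
    simp only [Pi.one_apply, one_mul]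
  have hcard (S : Finset (Fin m)) :
      ∫ z in Set.univ.pi (fun i => if i ∈ S then s else t), G z
        = ∫ z in Set.univ.pi (fun i : Fin m => if (i : ℕ) < S.card then s else t), G z := by
    refine setIntegral_univ_pi_ite_eq_of_card_eq G hG s t (T := {i | (i : ℕ) < S.card}) ?_
      |>.trans (by simp)
    simpa [Fin.card_filter_val_lt] using S.card_le_univ
  simp_rw [hexpand]
  rw [integral_finsetSum _ fun S _ => ((hGint.indicator (hSs S)).const_mul _)]
  simp_rw [integral_const_mul, setIntegral_univ_pi_indicator _ G hs hst, hcard]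
  rw [Finset.sum_powerset_apply_card (f := fun j => c ^ j *
    ∫ z in Set.univ.pi (fun i : Fin m => if (i : ℕ) < j then s else t), G z)]
  rw [Finset.card_univ, Fintype.card_fin]
  exact Finset.sum_congr rfl fun j _ => by rw [nsmul_eq_mul]; ring

theorem anyon_bose_rdm_minus_general (κ L : ℝ) (m n : ℕ)
    (χ : (Fin (m + n) → ℝ) → ℂ) (hcont : Continuous χ)
    (hsym : ∀ (π : Equiv.Perm (Fin (m + n))) (z : Fin (m + n) → ℝ), χ (z ∘ π) = χ z)
    (x x' : Fin n → ℝ)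
    (hxV : ∀ j, x j ∈ Set.Icc (-(L / 2)) (L / 2))
    (hx'V : ∀ j, x' j ∈ Set.Icc (-(L / 2)) (L / 2))
    (hx'x : ∀ j, x' j < x j) (hchain : ∀ j k : Fin n, j < k → x j < x' k) :
    (∫ z in Set.univ.pi (fun _ : Fin m => Set.Icc (-(L / 2)) (L / 2)),
        (starRingEnd ℂ) (Afac κ (Fin.append z x') * χ (Fin.append z x')) *
          (Afac κ (Fin.append z x) * χ (Fin.append z x)))
      = (Afac (-κ) x' * Afac κ x) *
          ∑ j ∈ Finset.range (m + 1),
            (-1) ^ j * (1 - Complex.exp (-(Complex.I * Real.pi * κ))) ^ j * (m.choose j : ℂ) *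
              ∫ z in Set.univ.pi (fun i : Fin m =>
                  if (i : ℕ) < j then ⋃ l, Set.Icc (x' l) (x l)
                  else Set.Icc (-(L / 2)) (L / 2)),
                (starRingEnd ℂ) (χ (Fin.append z x')) * χ (Fin.append z x) := by
  set V := Set.Icc (-(L / 2)) (L / 2)
  set I := ⋃ l, Set.Icc (x' l) (x l)
  set G : (Fin m → ℝ) → ℂ := fun z => starRingEnd ℂ (χ (Fin.append z x')) * χ (Fin.append z x)
  have hGsym (σ : Equiv.Perm (Fin m)) (z : Fin m → ℝ) : G (z ∘ σ) = G z := by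
    simp only [G, Fin.append_comp_perm, hsym]
  have hGint : IntegrableOn G (Set.univ.pi fun _ => V) := by
    refine Continuous.continuousOn ?_ |>.integrableOn_compact
      (isCompact_univ_pi fun _ => isCompact_Icc)
    have happend (y : Fin n → ℝ) : Continuous fun z : Fin m → ℝ => Fin.append z y :=
      (Fin.continuous_append m n).comp (.prodMk_left y)
    exact (Complex.continuous_conj.comp (hcont.comp (happend x'))).mul (hcont.comp (happend x))
  have hIV : I ⊆ V := Set.iUnion_subset fun l => Set.Icc_subset_Icc (hx'V l).1 (hxV l).2
  calc _ = ∫ z in Set.univ.pi (fun _ => V), Afac (-κ) x' * Afac κ x *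
        ((∏ i, (1 + (Complex.exp (-(Complex.I * Real.pi * κ)) - 1) * I.indicator 1 (z i))) *
          G z) := by
        refine setIntegral_congr_ae (MeasurableSet.univ_pi fun _ => measurableSet_Icc) ?_
        filter_upwards [ae_apply_ne (ι := Fin m) x', ae_apply_ne (ι := Fin m) x] with z hz' hz _
        rw [map_mul, mul_mul_mul_comm, conj_Afac_append_mul_Afac_append κ hx'x
          (pairwise_disjoint_Icc_of_right_lt_left hchain) z fun i l => ⟨hz' i l, hz i l⟩, mul_assoc]
    _ = _ := by
        rw [integral_const_mul, setIntegral_prod_one_add_mul_indicator G hGsym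
          (MeasurableSet.iUnion fun _ => measurableSet_Icc) hIV hGint]
        refine congrArg _ (Finset.sum_congr rfl fun j _ => ?_)
        rw [← neg_sub, neg_pow]

/-- Anyon–Bose expansion of the `n`-particle reduced density matrix, ordering `O₋`
(`x₁' < x₁ < ⋯ < xₙ' < xₙ`, `I₋ = ⋃ₗ [xₗ', xₗ]`), with `N = m + n` particles on
`V = [-L/2, L/2]` and `χᵃ = A_κ χ` for a continuous totally symmetric `χ`. -/
theorem anyon_bose_rdm_minus (κ L : ℝ) (hL : 0 < L) (m n : ℕ) (hn : 1 ≤ n)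
    (χ : (Fin (m + n) → ℝ) → ℂ) (hcont : Continuous χ)
    (hsym : ∀ (π : Equiv.Perm (Fin (m + n))) (z : Fin (m + n) → ℝ), χ (z ∘ π) = χ z)
    (x x' : Fin n → ℝ)
    (hxV : ∀ j, x j ∈ Set.Icc (-(L / 2)) (L / 2))
    (hx'V : ∀ j, x' j ∈ Set.Icc (-(L / 2)) (L / 2))
    (hx'x : ∀ j, x' j < x j) (hchain : ∀ j k : Fin n, j < k → x j < x' k) :
    (∫ z in Set.univ.pi (fun _ : Fin m => Set.Icc (-(L / 2)) (L / 2)),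
        (starRingEnd ℂ) (Afac κ (Fin.append z x') * χ (Fin.append z x')) *
          (Afac κ (Fin.append z x) * χ (Fin.append z x)))
      = (Afac (-κ) x' * Afac κ x) *
          ∑ j ∈ Finset.range (m + 1),
            (-1) ^ j * (1 - Complex.exp (-(Complex.I * Real.pi * κ))) ^ j * (m.choose j : ℂ) *
              ∫ z in Set.univ.pi (fun i : Fin m =>
                  if (i : ℕ) < j then ⋃ l, Set.Icc (x' l) (x l)
                  else Set.Icc (-(L / 2)) (L / 2)),
                (starRingEnd ℂ) (χ (Fin.append z x')) * χ (Fin.append z x) :=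
  anyon_bose_rdm_minus_general κ L m n χ hcont hsym x x' hxV hx'V hx'x hchain
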